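/- (Pohozaev identity on circles, radial case.) Let u : ℝ² → ℝ^m be twice continuously differentiable and satisfy (∂u/∂x_i) · Δu = 0 almost everywhere in ℝ² for i = 1, 2. Then for every x₀ ∈ ℝ² and every r > 0: 2∫₀^{2π} |(cos θ ∂₁u + sin θ ∂₂u)(x₀ + re^{iθ})|² dθ = ∫₀^{2π} |∇u(x₀ + re^{iθ})|² dθ; equivalently ∫₀^{2π} |∂u/∂ν|² dθ = ∫₀^{2π} |(1/r)∂u/∂θ|² dθ, where ∂u/∂ν = cos θ ∂₁u + sin θ ∂₂u is the radial derivative and (1/r)∂u/∂θ = -sin θ ∂₁u + cos θ ∂₂u the normalized angular derivative, evaluated at x₀ + re^{iθ}. -/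

import Mathlib

/-!
The Hopf differential `φ = |∂₁u|² - |∂₂u|² - 2i ∂₁u·∂₂u` satisfies the Cauchy–Riemann equations
as soon as `∂ᵢu · Δu = 0` (using `∂₁∂₂u = ∂₂∂₁u`); by continuity the a.e. hypothesis holds
everywhere, so `φ` is entire. Cauchy's theorem gives `∮ (z - x₀) φ(z) dz = 0` on every circle, and
at `z = x₀ + r e^{iθ}` the real part of `(z - x₀)² φ(z)` is `r² (2 |∂_ν u|² - |∇u|²)`.
-/

open Real MeasureTheory intervalIntegral

/-- First partial derivative `∂₁u` of a map `u : ℝ² → ℝ^m`. -/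
noncomputable def pd1 {m : ℕ} (u : ℝ × ℝ → EuclideanSpace ℝ (Fin m)) (x : ℝ × ℝ) :
    EuclideanSpace ℝ (Fin m) :=
  fderiv ℝ u x (1, 0)

/-- Second partial derivative `∂₂u` of a map `u : ℝ² → ℝ^m`. -/
noncomputable def pd2 {m : ℕ} (u : ℝ × ℝ → EuclideanSpace ℝ (Fin m)) (x : ℝ × ℝ) :
    EuclideanSpace ℝ (Fin m) :=
  fderiv ℝ u x (0, 1)

/-- The componentwise Laplacian `Δu = ∂₁₁u + ∂₂₂u` of a map `u : ℝ² → ℝ^m`. -/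
noncomputable def lap2 {m : ℕ} (u : ℝ × ℝ → EuclideanSpace ℝ (Fin m)) (x : ℝ × ℝ) :
    EuclideanSpace ℝ (Fin m) :=
  fderiv ℝ (pd1 u) x (1, 0) + fderiv ℝ (pd2 u) x (0, 1)

open scoped InnerProductSpace

open Complex in
theorem Complex.differentiableAt_mk_of_cauchyRiemann {P Q : ℝ × ℝ → ℝ}
    {P' Q' : ℝ × ℝ →L[ℝ] ℝ} {z : ℂ}
    (hP : HasFDerivAt P P' (z.re, z.im)) (hQ : HasFDerivAt Q Q' (z.re, z.im))
    (h₁ : P' (1, 0) = Q' (0, 1)) (h₂ : P' (0, 1) = -Q' (1, 0)) :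
    DifferentiableAt ℂ (fun w : ℂ ↦ (⟨P (w.re, w.im), Q (w.re, w.im)⟩ : ℂ)) z := by
  have hF := (equivRealProdCLM.symm : ℝ × ℝ →L[ℝ] ℂ).hasFDerivAt.comp z
    ((hP.prodMk hQ).comp z equivRealProdCLM.hasFDerivAt)
  refine (hF.complexOfReal_hasFDerivAt ?_).differentiableAt
  apply Complex.ext <;> simp [h₁, h₂]

theorem integral_circleMap_sq_smul_eq_zero {E : Type*} [NormedAddCommGroup E] [NormedSpace ℂ E]
    [CompleteSpace E] {f : ℂ → E} (hf : Differentiable ℂ f) (c : ℂ) {r : ℝ} (hr : 0 ≤ r) :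
    ∫ θ in 0..2 * π, circleMap 0 r θ ^ 2 • f (circleMap c r θ) = 0 := by
  have h := (((differentiable_id.sub_const c).smul hf).diffContOnCl
    (s := Metric.ball c r)).circleIntegral_eq_zero hr
  simp only [circleIntegral, deriv_circleMap, Pi.smul_apply', id, circleMap_sub_center,
    smul_smul] at h
  have hI : ∫ θ in 0..2 * π, Complex.I • circleMap 0 r θ ^ 2 • f (circleMap c r θ) = 0 := by
    rw [← h]
    congr with θ
    rw [smul_smul]
    ring_nf
  rwa [intervalIntegral.integral_smul, smul_eq_zero_iff_right Complex.I_ne_zero] at hI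

section HopfForm

variable {F : Type*} [NormedAddCommGroup F] [InnerProductSpace ℝ F]

/-- The square of `v - i w` for the complex-bilinear extension of `⟪·, ·⟫_ℝ`. -/
noncomputable def hopfForm (v w : F) : ℂ :=
  ⟨‖v‖ ^ 2 - ‖w‖ ^ 2, -2 * ⟪v, w⟫_ℝ⟩

theorem re_circleMap_sq_mul_hopfForm (v w : F) (r θ : ℝ) :
    (circleMap 0 r θ ^ 2 * hopfForm v w).re
      = r ^ 2 * (2 * ‖cos θ • v + sin θ • w‖ ^ 2 - (‖v‖ ^ 2 + ‖w‖ ^ 2)) := by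
  rw [norm_add_sq_real, norm_smul, norm_smul, mul_pow, mul_pow, Real.norm_eq_abs, Real.norm_eq_abs,
    sq_abs, sq_abs, real_inner_smul_left, real_inner_smul_right]
  simp only [hopfForm, sq, Complex.mul_re, Complex.mul_im, circleMap_zero_re, circleMap_zero_im]
  linear_combination (-(r ^ 2) * (‖v‖ ^ 2 + ‖w‖ ^ 2)) * sin_sq_add_cos_sq θ

end HopfForm

section HopfDifferential

variable {m : ℕ} {u : ℝ × ℝ → EuclideanSpace ℝ (Fin m)}

theorem contDiff_pd1 (hu : ContDiff ℝ 2 u) : ContDiff ℝ 1 (pd1 u) :=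
  (hu.fderiv_right (by norm_num)).clm_apply contDiff_const

theorem contDiff_pd2 (hu : ContDiff ℝ 2 u) : ContDiff ℝ 1 (pd2 u) :=
  (hu.fderiv_right (by norm_num)).clm_apply contDiff_const

theorem fderiv_pd1_apply_eq_fderiv_pd2_apply (hu : ContDiff ℝ 2 u) (x : ℝ × ℝ) :
    fderiv ℝ (pd1 u) x (0, 1) = fderiv ℝ (pd2 u) x (1, 0) := by
  have hdu : DifferentiableAt ℝ (fderiv ℝ u) x :=
    (hu.fderiv_right (m := 1) (by norm_num)).differentiable one_ne_zero x
  unfold pd1 pd2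
  rw [fderiv_clm_apply hdu (differentiableAt_const _),
    fderiv_clm_apply hdu (differentiableAt_const _)]
  simpa using (hu.contDiffAt.isSymmSndFDerivAt (by simp)) (0, 1) (1, 0)

theorem continuous_lap2 (hu : ContDiff ℝ 2 u) : Continuous (lap2 u) := by
  have h1 := (contDiff_pd1 hu).continuous_fderiv one_ne_zero
  have h2 := (contDiff_pd2 hu).continuous_fderiv one_ne_zero
  exact (h1.clm_apply continuous_const).add (h2.clm_apply continuous_const)

theorem inner_pd_lap2_eq_zero_of_ae (hu : ContDiff ℝ 2 u)
    (h : ∀ᵐ x : ℝ × ℝ, ⟪pd1 u x, lap2 u x⟫_ℝ = 0 ∧ ⟪pd2 u x, lap2 u x⟫_ℝ = 0) (x : ℝ × ℝ) :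
    ⟪pd1 u x, lap2 u x⟫_ℝ = 0 ∧ ⟪pd2 u x, lap2 u x⟫_ℝ = 0 := by
  have hΔ := continuous_lap2 hu
  have h1 : (fun x ↦ ⟪pd1 u x, lap2 u x⟫_ℝ) = 0 :=
    (Continuous.ae_eq_iff_eq volume ((contDiff_pd1 hu).continuous.inner hΔ) continuous_zero).1
      (h.mono fun _ hx ↦ hx.1)
  have h2 : (fun x ↦ ⟪pd2 u x, lap2 u x⟫_ℝ) = 0 :=
    (Continuous.ae_eq_iff_eq volume ((contDiff_pd2 hu).continuous.inner hΔ) continuous_zero).1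
      (h.mono fun _ hx ↦ hx.2)
  exact ⟨congrFun h1 x, congrFun h2 x⟩

/-- The Hopf differential `4 ∂_z u · ∂_z u`, where `∂_z = (∂₁ - i ∂₂) / 2`. -/
noncomputable def hopfDifferential (u : ℝ × ℝ → EuclideanSpace ℝ (Fin m)) (z : ℂ) : ℂ :=
  hopfForm (pd1 u (z.re, z.im)) (pd2 u (z.re, z.im))

theorem differentiable_hopfDifferential (hu : ContDiff ℝ 2 u)
    (hΔ : ∀ x, ⟪pd1 u x, lap2 u x⟫_ℝ = 0 ∧ ⟪pd2 u x, lap2 u x⟫_ℝ = 0) :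
    Differentiable ℂ (hopfDifferential u) := by
  intro z
  set x : ℝ × ℝ := (z.re, z.im)
  have ha : HasFDerivAt (pd1 u) (fderiv ℝ (pd1 u) x) x :=
    ((contDiff_pd1 hu).differentiable one_ne_zero x).hasFDerivAt
  have hb : HasFDerivAt (pd2 u) (fderiv ℝ (pd2 u) x) x :=
    ((contDiff_pd2 hu).differentiable one_ne_zero x).hasFDerivAt
  have hsymm := fderiv_pd1_apply_eq_fderiv_pd2_apply hu x
  obtain ⟨h1, h2⟩ := hΔ x
  simp only [lap2, inner_add_right] at h1 h2
  apply Complex.differentiableAt_mk_of_cauchyRiemann (ha.norm_sq.sub hb.norm_sq)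
    ((ha.inner ℝ hb).const_mul (-2)) <;>
    simp only [sub_apply, smul_apply, ContinuousLinearMap.comp_apply, coe_innerSL_apply,
      nsmul_eq_mul, Nat.cast_ofNat, neg_smul, neg_apply, ContinuousLinearMap.prod_apply,
      fderivInnerCLM_apply, smul_eq_mul, hsymm, real_inner_comm (pd2 u x)]
  · linear_combination 2 * h1
  · linear_combination -2 * h2

end HopfDifferential

/-- **Pohozaev identity on circles, radial case.** Let `u : ℝ² → ℝ^m` be `C²` with
`∂ᵢu · Δu = 0` a.e. for `i = 1,2`. Then for every `x₀ ∈ ℝ²` and `r > 0`,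
`2 ∫₀^{2π} |∂u/∂ν|² dθ = ∫₀^{2π} |∇u|² dθ` on `∂B(x₀,r)`, where
`∂u/∂ν = cos θ ∂₁u + sin θ ∂₂u` is evaluated at `x₀ + r e^{iθ}`. -/
theorem pohozaev_on_circles_radial {m : ℕ} (u : ℝ × ℝ → EuclideanSpace ℝ (Fin m))
    (hu : ContDiff ℝ 2 u)
    (heq : ∀ᵐ x : ℝ × ℝ,
      (inner ℝ (pd1 u x) (lap2 u x) : ℝ) = 0 ∧ (inner ℝ (pd2 u x) (lap2 u x) : ℝ) = 0) :
    ∀ (x₀ : ℝ × ℝ) (r : ℝ), 0 < r →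
      2 * ∫ θ in (0:ℝ)..(2 * π),
          ‖Real.cos θ • pd1 u (x₀.1 + r * Real.cos θ, x₀.2 + r * Real.sin θ)
            + Real.sin θ • pd2 u (x₀.1 + r * Real.cos θ, x₀.2 + r * Real.sin θ)‖ ^ 2
        = ∫ θ in (0:ℝ)..(2 * π),
            (‖pd1 u (x₀.1 + r * Real.cos θ, x₀.2 + r * Real.sin θ)‖ ^ 2
              + ‖pd2 u (x₀.1 + r * Real.cos θ, x₀.2 + r * Real.sin θ)‖ ^ 2) := by
  have hhol := differentiable_hopfDifferential hu (inner_pd_lap2_eq_zero_of_ae hu heq)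
  have hφ := hhol.continuous
  have h1 := (contDiff_pd1 hu).continuous
  have h2 := (contDiff_pd2 hu).continuous
  intro x₀ r hr
  set c : ℂ := ⟨x₀.1, x₀.2⟩
  have hcoord (θ : ℝ) : ((circleMap c r θ).re, (circleMap c r θ).im)
      = (x₀.1 + r * cos θ, x₀.2 + r * sin θ) := by
    simp [circleMap, c]
  have hre : ∫ θ in 0..2 * π,
      RCLike.re (circleMap 0 r θ ^ 2 • hopfDifferential u (circleMap c r θ)) = 0 := by
    rw [intervalIntegral_re ((by fun_prop : Continuous _).intervalIntegrable _ _),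
      integral_circleMap_sq_smul_eq_zero hhol c hr.le, map_zero]
  simp only [smul_eq_mul, RCLike.re_to_complex, hopfDifferential, hcoord,
    re_circleMap_sq_mul_hopfForm] at hre
  rw [intervalIntegral.integral_const_mul,
    integral_sub ((by fun_prop : Continuous _).intervalIntegrable _ _)
      ((by fun_prop : Continuous _).intervalIntegrable _ _),
    intervalIntegral.integral_const_mul] at hre
  have := (mul_eq_zero.1 hre).resolve_left (pow_ne_zero 2 hr.ne')
  linarith
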